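/- Let $H\in(0,1)$ and define the map $F(s,t)=\mathrm{Var}(B_H(t)-B_H(s))=|t-s|^{2H}$ on $A=\{(s,t):0\le s\le t\le T\}$. Then for the drawdown field $Z_u(s,t)=\frac{B_H(s)-B_H(t)}{u+\mu(t-s)+\frac{1}{2}(s^{2H}-t^{2H})}m(u)$ with $m(u)=\frac{u+\mu T-\frac{1}{2}T^{2H}}{T^H}$, there is a constant $Q_1>0$ (independent of $u$ large) such that $\mathbb{E}[(Z_u(s,t)-Z_u(s',t'))^2]\le Q_1(|s-s'|^{2H}+|t-t'|^{2H})$ for all $(s,t),(s',t')\in A$. -/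

import Mathlib

open MeasureTheory

lemma aux_add_rpow {p x y : ℝ} (hp : 0 ≤ p) (hp1 : p ≤ 1) (hx : 0 ≤ x) (hy : 0 ≤ y) :
    (x + y) ^ p ≤ x ^ p + y ^ p := by
  lift x to NNReal using hx
  lift y to NNReal using hy
  exact_mod_cast NNReal.rpow_add_le_add_rpow x y hp hp1

lemma aux_rpow_sub_le {p x y : ℝ} (hp : 0 ≤ p) (hp1 : p ≤ 1) (hy : 0 ≤ y) (hxy : y ≤ x) :
    x ^ p - y ^ p ≤ (x - y) ^ p := by
  have h : x ^ p ≤ (x - y) ^ p + y ^ p := by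
    have := aux_add_rpow hp hp1 (by linarith : (0:ℝ) ≤ x - y) hy
    simpa using this
  linarith

lemma aux_sq_le {T d e : ℝ} (he1 : e ≤ 1) (hd : 0 ≤ d) (hdT : d ≤ T) :
    d ^ 2 ≤ T ^ (2 - 2*e) * d ^ (2*e) := by
  have h1 : d ^ (2*e) * d ^ (2 - 2*e) = d ^ 2 := by
    rw [← Real.rpow_add' hd (by norm_num)]
    norm_num [Real.rpow_two]
  have h2 : d ^ (2 - 2*e) ≤ T ^ (2 - 2*e) := Real.rpow_le_rpow hd hdT (by linarith)
  have h3 : 0 ≤ d ^ (2*e) := Real.rpow_nonneg hd _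
  nlinarith [Real.rpow_nonneg hd (2 - 2*e)]

lemma aux_pow_diff_ord {H T x y : ℝ} (hH0 : 0 < H) (hH1 : H ≤ 1) (hy : 0 ≤ y)
    (hxy : y ≤ x) (hxT : x ≤ T) :
    (x ^ (2*H) - y ^ (2*H))^2 ≤ 4 * T^(2*H) * (x - y) ^ (2*H) := by
  have hx : 0 ≤ x := hy.trans hxy
  have hT : 0 ≤ T := hx.trans hxT
  have h1 : x ^ H - y ^ H ≤ (x - y) ^ H := aux_rpow_sub_le hH0.le hH1 hy hxy
  have h2 : y ^ H ≤ x ^ H := Real.rpow_le_rpow hy hxy hH0.le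
  have h3 : x ^ H ≤ T ^ H := Real.rpow_le_rpow hx hxT hH0.le
  have h4 : y ^ H ≤ T ^ H := Real.rpow_le_rpow hy (hxy.trans hxT) hH0.le
  have hsq : ∀ z : ℝ, 0 ≤ z → z ^ (2*H) = z ^ H * z ^ H := by
    intro z hz
    rw [two_mul, Real.rpow_add' hz (by positivity)]
  rw [hsq x hx, hsq y hy, hsq T hT, hsq (x - y) (by linarith)]
  have h5 : 0 ≤ y ^ H := Real.rpow_nonneg hy _
  have h6 : 0 ≤ (x - y) ^ H := Real.rpow_nonneg (by linarith) _
  nlinarith [mul_le_mul h1 (by linarith : x ^ H + y ^ H ≤ 2 * T ^ H) (by linarith) h6,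
    mul_nonneg (by linarith : (0:ℝ) ≤ x ^ H - y ^ H) (by linarith : (0:ℝ) ≤ x ^ H + y ^ H)]

lemma aux_pow_diff {H T x y : ℝ} (hH0 : 0 < H) (hH1 : H ≤ 1)
    (hx : 0 ≤ x) (hxT : x ≤ T) (hy : 0 ≤ y) (hyT : y ≤ T) :
    (x ^ (2*H) - y ^ (2*H))^2 ≤ 4 * T^(2*H) * |x - y| ^ (2*H) := by
  rcases le_total y x with h | h
  · rw [abs_of_nonneg (by linarith)]
    exact aux_pow_diff_ord hH0 hH1 hy h hxT
  · rw [abs_of_nonpos (by linarith), neg_sub]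
    have := aux_pow_diff_ord hH0 hH1 hx h hyT
    nlinarith [this]

lemma aux_two_sq (a b p q : ℝ) : (a*p + b*q)^2 ≤ 2*a^2*p^2 + 2*b^2*q^2 := by
  nlinarith [sq_nonneg (a*p - b*q)]

lemma aux_four_sq (w x y z : ℝ) : (w + x + y + z)^2 ≤ 4*w^2 + 4*x^2 + 4*y^2 + 4*z^2 := by
  nlinarith [sq_nonneg (w - x), sq_nonneg (w - y), sq_nonneg (w - z), sq_nonneg (x - y),
    sq_nonneg (x - z), sq_nonneg (y - z)]

lemma aux_int_mul {Ω : Type*} [MeasurableSpace Ω] {μP : Measure Ω} {f g : Ω → ℝ}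
    (hf : MemLp f 2 μP) (hg : MemLp g 2 μP) :
    Integrable (fun ω => f ω * g ω) μP := by
  have h := (((hf.add hg).integrable_sq).sub hf.integrable_sq).sub hg.integrable_sq
  have e : (fun ω => f ω * g ω)
      = fun ω => (((f + g) ω ^ 2 - f ω ^ 2) - g ω ^ 2) / 2 := by
    funext ω; simp [Pi.add_apply]; ring
  rw [e]
  exact h.div_const 2

lemma aux_sq_sub_le {Ω : Type*} [MeasurableSpace Ω] {μP : Measure Ω} {f g : Ω → ℝ}
    (hf : MemLp f 2 μP) (hg : MemLp g 2 μP) :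
    ∫ ω, (f ω - g ω) ^ 2 ∂μP ≤ 2 * ∫ ω, f ω ^ 2 ∂μP + 2 * ∫ ω, g ω ^ 2 ∂μP := by
  have h1 : ∫ ω, (f ω - g ω) ^ 2 ∂μP ≤ ∫ ω, (2 * f ω ^ 2 + 2 * g ω ^ 2) ∂μP := by
    refine integral_mono_of_nonneg (Filter.Eventually.of_forall fun ω => sq_nonneg _)
      ((hf.integrable_sq.const_mul 2).add (hg.integrable_sq.const_mul 2))
      (Filter.Eventually.of_forall fun ω => ?_)
    simp only []; nlinarith [sq_nonneg (f ω + g ω)]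
  rw [integral_add (hf.integrable_sq.const_mul 2) (hg.integrable_sq.const_mul 2),
    integral_const_mul, integral_const_mul] at h1
  exact h1

/-- The normalized drawdown field `Z_u(s,t)`. -/
noncomputable def Zfield {Ω : Type*} (B : ℝ → Ω → ℝ) (H μ T u s t : ℝ) (ω : Ω) : ℝ :=
  (B s ω - B t ω) / (u + μ * (t - s) + (s ^ (2*H) - t ^ (2*H)) / 2) *
    ((u + μ * T - T ^ (2*H) / 2) / T ^ H)

set_option maxHeartbeats 1000000 in
theorem Zfield_increment_bound
    {Ω : Type*} [MeasurableSpace Ω] (μP : Measure Ω) [IsProbabilityMeasure μP]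
    (H T μ : ℝ) (hH : H ∈ Set.Ioo (0:ℝ) 1) (hT : 0 < T)
    (B : ℝ → Ω → ℝ)
    (hL2 : ∀ t : ℝ, 0 ≤ t → MemLp (B t) 2 μP)
    (hmean : ∀ t : ℝ, 0 ≤ t → ∫ ω, B t ω ∂μP = 0)
    (hcov : ∀ s t : ℝ, 0 ≤ s → 0 ≤ t →
      ∫ ω, B s ω * B t ω ∂μP = (|s| ^ (2*H) + |t| ^ (2*H) - |t - s| ^ (2*H)) / 2) :
    ∃ Q1 : ℝ, 0 < Q1 ∧ ∃ u0 : ℝ, ∀ u : ℝ, u0 ≤ u →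
      (∀ s t : ℝ, 0 ≤ s → s ≤ t → t ≤ T →
          0 < u + μ * (t - s) + (s ^ (2*H) - t ^ (2*H)) / 2) ∧
      ∀ s t s' t' : ℝ, 0 ≤ s → s ≤ t → t ≤ T → 0 ≤ s' → s' ≤ t' → t' ≤ T →
        ∫ ω, (Zfield B H μ T u s t ω - Zfield B H μ T u s' t' ω) ^ 2 ∂μP ≤
          Q1 * (|s - s'| ^ (2*H) + |t - t'| ^ (2*H)) := by
  obtain ⟨hH0, hH1⟩ := hH
  have h2H : (0:ℝ) < 2*H := by linarith
  have hTH : (0:ℝ) < T ^ H := Real.rpow_pos_of_pos hT H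
  have hT2H : (0:ℝ) < T ^ (2*H) := Real.rpow_pos_of_pos hT _
  -- second moment of increments
  have hvar : ∀ a b : ℝ, 0 ≤ a → 0 ≤ b →
      ∫ ω, (B a ω - B b ω) ^ 2 ∂μP = |a - b| ^ (2*H) := by
    intro a b ha hb
    have hii : ∀ c d : ℝ, 0 ≤ c → 0 ≤ d → Integrable (fun ω => B c ω * B d ω) μP :=
      fun c d hc hd => aux_int_mul (hL2 c hc) (hL2 d hd)
    have e : ∀ ω, (B a ω - B b ω) ^ 2
        = B a ω * B a ω - 2*(B a ω * B b ω) + B b ω * B b ω := fun ω => by ring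
    calc ∫ ω, (B a ω - B b ω) ^ 2 ∂μP
        = ∫ ω, (B a ω * B a ω - 2*(B a ω * B b ω) + B b ω * B b ω) ∂μP := by
          simp_rw [e]
      _ = (∫ ω, B a ω * B a ω ∂μP) - 2*(∫ ω, B a ω * B b ω ∂μP)
            + ∫ ω, B b ω * B b ω ∂μP := by
          have I1 : Integrable (fun ω => B a ω * B a ω - 2 * (B a ω * B b ω)) μP :=
            (hii a a ha ha).sub ((hii a b ha hb).const_mul 2)
          have I2 : Integrable (fun ω => 2 * (B a ω * B b ω)) μP :=
            (hii a b ha hb).const_mul 2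
          rw [integral_add I1 (hii b b hb hb), integral_sub (hii a a ha ha) I2,
            integral_const_mul]
      _ = |a - b| ^ (2*H) := by
          rw [hcov a a ha ha, hcov a b ha hb, hcov b b hb hb]
          simp only [sub_self, abs_zero, Real.zero_rpow h2H.ne']
          rw [abs_sub_comm b a]
          ring
  refine ⟨64 / T^(2*H) + 512*(μ^2 * T^(2-2*H) + T^(2*H)) + 1, by positivity,
    max 1 (2*(|μ| * T + T^(2*H))), ?_⟩
  intro u hu
  have hu1 : (1:ℝ) ≤ u := le_trans (le_max_left _ _) hu
  have hu2 : 2*(|μ| * T + T^(2*H)) ≤ u := le_trans (le_max_right _ _) hu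
  have hu0 : (0:ℝ) < u := lt_of_lt_of_le one_pos hu1
  have hμb : ∀ x y : ℝ, 0 ≤ y → y ≤ x → x ≤ T → |μ*(x - y)| ≤ |μ| * T := by
    intro x y hy hyx hxT
    rw [abs_mul, abs_of_nonneg (by linarith : (0:ℝ) ≤ x - y)]
    exact mul_le_mul_of_nonneg_left (by linarith) (abs_nonneg μ)
  have hDbound : ∀ s t : ℝ, 0 ≤ s → s ≤ t → t ≤ T →
      u/2 ≤ u + μ*(t - s) + (s^(2*H) - t^(2*H))/2 ∧
      u + μ*(t - s) + (s^(2*H) - t^(2*H))/2 ≤ 2*u := by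
    intro s t hs hst htT
    have h1 := abs_le.mp (hμb t s hs hst htT)
    have hs0 : 0 ≤ s ^ (2*H) := Real.rpow_nonneg hs _
    have ht0 : 0 ≤ t ^ (2*H) := Real.rpow_nonneg (hs.trans hst) _
    have hsT : s ^ (2*H) ≤ T ^ (2*H) := Real.rpow_le_rpow hs (hst.trans htT) h2H.le
    have htT2 : t ^ (2*H) ≤ T ^ (2*H) := Real.rpow_le_rpow (hs.trans hst) htT h2H.le
    constructor <;> nlinarith [abs_nonneg μ, mul_nonneg (abs_nonneg μ) hT.le]
  refine ⟨fun s t hs hst htT => by linarith [(hDbound s t hs hst htT).1], ?_⟩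
  intro s t s' t' hs hst htT hs' hst' ht'T
  have ht0 : 0 ≤ t := hs.trans hst
  have ht0' : 0 ≤ t' := hs'.trans hst'
  have hsT : s ≤ T := hst.trans htT
  have hs'T : s' ≤ T := hst'.trans ht'T
  obtain ⟨D, hDdef⟩ : ∃ x : ℝ, x = u + μ*(t - s) + (s^(2*H) - t^(2*H))/2 := ⟨_, rfl⟩
  obtain ⟨D', hD'def⟩ : ∃ x : ℝ, x = u + μ*(t' - s') + (s'^(2*H) - t'^(2*H))/2 := ⟨_, rfl⟩
  obtain ⟨N, hNdef⟩ : ∃ x : ℝ, x = u + μ*T - T^(2*H)/2 := ⟨_, rfl⟩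
  have hNb : u/2 ≤ N ∧ N ≤ 2*u := by
    have h1 : |μ*T| = |μ| * T := by rw [abs_mul, abs_of_pos hT]
    have h2 := neg_abs_le (μ*T)
    have h3 := le_abs_self (μ*T)
    rw [h1] at h2 h3
    constructor <;> (rw [hNdef]; linarith [hT2H])
  obtain ⟨m, hmdef⟩ : ∃ x : ℝ, x = N / T^H := ⟨_, rfl⟩
  have hDb := hDbound s t hs hst htT
  have hDb' := hDbound s' t' hs' hst' ht'T
  have hDb1 : u/2 ≤ D := by rw [hDdef]; exact hDb.1
  have hDb2 : D ≤ 2*u := by rw [hDdef]; exact hDb.2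
  have hDb1' : u/2 ≤ D' := by rw [hD'def]; exact hDb'.1
  have hDb2' : D' ≤ 2*u := by rw [hD'def]; exact hDb'.2
  have hDpos : 0 < D := by linarith [hDb1]
  have hD'pos : 0 < D' := by linarith [hDb1']
  obtain ⟨A1, hA1def⟩ : ∃ x : ℝ, x = m / D := ⟨_, rfl⟩
  obtain ⟨A2, hA2def⟩ : ∃ x : ℝ, x = m * (D' - D) / (D * D') := ⟨_, rfl⟩
  -- key pointwise identity
  have hkey : ∀ ω, Zfield B H μ T u s t ω - Zfield B H μ T u s' t' ω
      = A1 * ((B s ω - B t ω) - (B s' ω - B t' ω)) + A2 * (B s' ω - B t' ω) := by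
    intro ω
    simp only [Zfield, ← hDdef, ← hD'def, ← hNdef, hA1def, hA2def, hmdef]
    field_simp
    ring
  -- Memℒp facts
  have hXp : MemLp (fun ω => (B s ω - B t ω) - (B s' ω - B t' ω)) 2 μP :=
    ((hL2 s hs).sub (hL2 t ht0)).sub ((hL2 s' hs').sub (hL2 t' ht0'))
  have hXq : MemLp (fun ω => B s' ω - B t' ω) 2 μP := (hL2 s' hs').sub (hL2 t' ht0')
  -- first integral inequality
  have hstep1 : ∫ ω, (Zfield B H μ T u s t ω - Zfield B H μ T u s' t' ω) ^ 2 ∂μP ≤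
      2*A1^2 * ∫ ω, ((B s ω - B t ω) - (B s' ω - B t' ω))^2 ∂μP
      + 2*A2^2 * ∫ ω, (B s' ω - B t' ω)^2 ∂μP := by
    have I1 : Integrable (fun ω => 2*A1^2 * ((B s ω - B t ω) - (B s' ω - B t' ω))^2) μP :=
      hXp.integrable_sq.const_mul _
    have I2 : Integrable (fun ω => 2*A2^2 * (B s' ω - B t' ω)^2) μP :=
      hXq.integrable_sq.const_mul _
    have hpt : ∀ ω, (Zfield B H μ T u s t ω - Zfield B H μ T u s' t' ω) ^ 2 ≤
        2*A1^2 * ((B s ω - B t ω) - (B s' ω - B t' ω))^2 + 2*A2^2 * (B s' ω - B t' ω)^2 := by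
      intro ω
      rw [hkey ω]
      exact aux_two_sq _ _ _ _
    have h1 : ∫ ω, (Zfield B H μ T u s t ω - Zfield B H μ T u s' t' ω) ^ 2 ∂μP ≤
        ∫ ω, (2*A1^2 * ((B s ω - B t ω) - (B s' ω - B t' ω))^2
          + 2*A2^2 * (B s' ω - B t' ω)^2) ∂μP :=
      integral_mono_of_nonneg (Filter.Eventually.of_forall fun ω => sq_nonneg _)
        (I1.add I2) (Filter.Eventually.of_forall hpt)
    rwa [integral_add I1 I2, integral_const_mul, integral_const_mul] at h1
  -- bounds on the two integrals
  have hp2 : ∫ ω, ((B s ω - B t ω) - (B s' ω - B t' ω))^2 ∂μP ≤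
      2*|s - s'|^(2*H) + 2*|t - t'|^(2*H) := by
    have e : ∀ ω : Ω, ((B s ω - B t ω) - (B s' ω - B t' ω))^2
        = ((B s ω - B s' ω) - (B t ω - B t' ω))^2 := fun ω => by ring
    simp_rw [e]
    have h2 := aux_sq_sub_le (μP := μP) (f := fun ω => B s ω - B s' ω)
      (g := fun ω => B t ω - B t' ω) ((hL2 s hs).sub (hL2 s' hs'))
      ((hL2 t ht0).sub (hL2 t' ht0'))
    rw [hvar s s' hs hs', hvar t t' ht0 ht0'] at h2
    exact h2
  have hq2 : ∫ ω, (B s' ω - B t' ω)^2 ∂μP ≤ T^(2*H) := by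
    rw [hvar s' t' hs' ht0']
    refine Real.rpow_le_rpow (abs_nonneg _) ?_ h2H.le
    rw [abs_of_nonpos (by linarith), neg_sub]
    linarith
  have hP0 : 0 ≤ ∫ ω, ((B s ω - B t ω) - (B s' ω - B t' ω))^2 ∂μP :=
    integral_nonneg fun ω => sq_nonneg _
  have hQ0 : 0 ≤ ∫ ω, (B s' ω - B t' ω)^2 ∂μP := integral_nonneg fun ω => sq_nonneg _
  -- deterministic bounds
  have hmTH : m * T^H = N := by rw [hmdef]; exact div_mul_cancel₀ N hTH.ne'
  have hT2e : T^H * T^H = T^(2*H) := by rw [two_mul, Real.rpow_add hT]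
  have hN2 : N^2 ≤ 4*u^2 := by nlinarith only [hNb.1, hNb.2, hu0]
  have hA1b : A1^2 ≤ 16 / T^(2*H) := by
    rw [hA1def, div_pow, div_le_div_iff₀ (by positivity) hT2H]
    have e1 : m^2 * T^(2*H) = N^2 := by rw [← hT2e, ← hmTH]; ring
    rw [e1]
    nlinarith only [hDb1, hN2, hu0]
  have hDD : u^2/4 ≤ D*D' := by nlinarith only [hDb1, hDb1', hu0]
  have hA2b : A2^2 ≤ 64 * (D' - D)^2 / T^(2*H) := by
    rw [hA2def, div_pow, div_le_div_iff₀ (by positivity) hT2H]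
    have e1 : (m * (D' - D))^2 * T^(2*H) = N^2 * (D' - D)^2 := by
      rw [← hT2e, ← hmTH]; ring
    have hDD2 : (u^2/4)^2 ≤ (D*D')^2 := by
      have := pow_le_pow_left₀ (by positivity : (0:ℝ) ≤ u^2/4) hDD 2
      simpa using this
    have h1 : N^2 * (D' - D)^2 ≤ 4*u^2 * (D' - D)^2 :=
      mul_le_mul_of_nonneg_right hN2 (sq_nonneg _)
    have hu21 : 1 ≤ u^2 := by nlinarith only [hu1]
    have hu24 : u^2 ≤ u^4 := by nlinarith only [hu21, sq_nonneg u]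
    have h2 : 4*u^2*(D' - D)^2 ≤ 4*u^4*(D' - D)^2 := by nlinarith only [sq_nonneg (D' - D), hu24]
    have h4 : 64*(u^2/4)^2*(D' - D)^2 ≤ 64*(D*D')^2*(D' - D)^2 := by
      nlinarith only [hDD2, sq_nonneg (D' - D)]
    rw [e1]
    linarith only [h1, h2, h4]
  -- bound on (D' - D)^2
  have hΔ : (D' - D)^2 ≤ (4*μ^2*T^(2-2*H) + 4*T^(2*H)) * (|s - s'|^(2*H) + |t - t'|^(2*H)) := by
    have e1 : (s - s')^2 ≤ T^(2-2*H) * |s - s'|^(2*H) := by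
      have := aux_sq_le (T := T) (e := H) hH1.le (abs_nonneg (s - s'))
        (abs_le.mpr ⟨by linarith, by linarith⟩)
      simpa [sq_abs] using this
    have e2 : (t - t')^2 ≤ T^(2-2*H) * |t - t'|^(2*H) := by
      have := aux_sq_le (T := T) (e := H) hH1.le (abs_nonneg (t - t'))
        (abs_le.mpr ⟨by linarith, by linarith⟩)
      simpa [sq_abs] using this
    have e3 : (s'^(2*H) - s^(2*H))^2 ≤ 4*T^(2*H)*|s - s'|^(2*H) := by
      have := aux_pow_diff hH0 hH1.le hs' hs'T hs hsT
      rwa [abs_sub_comm] at this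
    have e4 : (t'^(2*H) - t^(2*H))^2 ≤ 4*T^(2*H)*|t - t'|^(2*H) := by
      have := aux_pow_diff hH0 hH1.le ht0' ht'T ht0 htT
      rwa [abs_sub_comm] at this
    have hDiff : D' - D = μ*(t' - t) + (-(μ*(s' - s))) + (s'^(2*H) - s^(2*H))/2
        + (-((t'^(2*H) - t^(2*H))/2)) := by rw [hDdef, hD'def]; ring
    rw [hDiff]
    have hq := aux_four_sq (μ*(t' - t)) (-(μ*(s' - s))) ((s'^(2*H) - s^(2*H))/2)
      (-((t'^(2*H) - t^(2*H))/2))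
    have m1 : μ^2*(s - s')^2 ≤ μ^2*(T^(2-2*H)*|s - s'|^(2*H)) :=
      mul_le_mul_of_nonneg_left e1 (sq_nonneg μ)
    have m2 : μ^2*(t - t')^2 ≤ μ^2*(T^(2-2*H)*|t - t'|^(2*H)) :=
      mul_le_mul_of_nonneg_left e2 (sq_nonneg μ)
    linarith only [hq, m1, m2, e3, e4]
  -- final assembly
  have t1 : 2*A1^2 * ∫ ω, ((B s ω - B t ω) - (B s' ω - B t' ω))^2 ∂μP ≤
      2*(16 / T^(2*H)) * (2*|s - s'|^(2*H) + 2*|t - t'|^(2*H)) := by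
    have h := mul_le_mul hA1b hp2 hP0 (by positivity)
    linarith only [h]
  have t2 : 2*A2^2 * ∫ ω, (B s' ω - B t' ω)^2 ∂μP ≤
      2*(64 * (D' - D)^2 / T^(2*H)) * T^(2*H) := by
    have h := mul_le_mul hA2b hq2 hQ0 (by positivity)
    linarith only [h]
  have t2' : 2*(64 * (D' - D)^2 / T^(2*H)) * T^(2*H) = 128 * (D' - D)^2 := by
    field_simp
    ring
  have hδ0 : 0 ≤ |s - s'|^(2*H) + |t - t'|^(2*H) := by positivity
  calc ∫ ω, (Zfield B H μ T u s t ω - Zfield B H μ T u s' t' ω) ^ 2 ∂μP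
      ≤ 2*A1^2 * ∫ ω, ((B s ω - B t ω) - (B s' ω - B t' ω))^2 ∂μP
        + 2*A2^2 * ∫ ω, (B s' ω - B t' ω)^2 ∂μP := hstep1
    _ ≤ 2*(16 / T^(2*H)) * (2*|s - s'|^(2*H) + 2*|t - t'|^(2*H)) + 128 * (D' - D)^2 := by
        rw [← t2']; linarith [t1, t2]
    _ = (64 / T^(2*H)) * (|s - s'|^(2*H) + |t - t'|^(2*H)) + 128 * (D' - D)^2 := by ring
    _ ≤ (64 / T^(2*H)) * (|s - s'|^(2*H) + |t - t'|^(2*H))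
        + 512*(μ^2 * T^(2-2*H) + T^(2*H)) * (|s - s'|^(2*H) + |t - t'|^(2*H)) := by
        linarith only [hΔ]
    _ ≤ (64 / T^(2*H) + 512*(μ^2 * T^(2-2*H) + T^(2*H)) + 1) *
        (|s - s'|^(2*H) + |t - t'|^(2*H)) := by linarith only [hδ0]
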